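/- Let H be a bialgebra and L : H → End(H) the map a ↦ L_a where L_a(x) = ax. Then H is a Hopf algebra if and only if L is invertible in the convolution algebra Hom(H, End(H)) (with convolution product (f*g)(x) = Σ f(x₍₁₎)∘g(x₍₂₎) and unit x ↦ ε(x)id). -/
import Mathlib


open TensorProduct

variable (k H : Type*) [Field k] [Ring H] [Bialgebra k H]

/-- The convolution product on `Hom(H, End(H))`: `(f * g)(x) = Σ f(x₍₁₎) ∘ g(x₍₂₎)`. -/
noncomputable def conv (f g : H →ₗ[k] Module.End k H) : H →ₗ[k] Module.End k H :=
  LinearMap.mul' k (Module.End k H) ∘ₗ TensorProduct.map f g ∘ₗ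
    (Coalgebra.comul (R := k) (A := H))

/-- The unit of the convolution algebra `Hom(H, End(H))`: `x ↦ ε(x)·id`. -/
noncomputable def convUnit : H →ₗ[k] Module.End k H :=
  Algebra.linearMap k (Module.End k H) ∘ₗ (Coalgebra.counit (R := k) (A := H))

/-- `L : H → End(H)`, `a ↦ L_a` with `L_a(x) = ax`. -/
noncomputable def Lmap : H →ₗ[k] Module.End k H := LinearMap.mul k H

section aux
variable {k H}

noncomputable def evalOne : Module.End k H →ₗ[k] H := LinearMap.applyₗ (1 : H)

@[simp] lemma evalOne_apply (f : Module.End k H) : evalOne (k := k) f = f 1 := rfl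

lemma evalOne_comp_Lmap : evalOne ∘ₗ Lmap k H = LinearMap.id := by
  ext x; simp [Lmap]

lemma key_mul (f : H →ₗ[k] H) :
    LinearMap.mul' k (Module.End k H) ∘ₗ TensorProduct.map (Lmap k H ∘ₗ f) (Lmap k H) =
      Lmap k H ∘ₗ LinearMap.mul' k H ∘ₗ f.rTensor H := by
  apply TensorProduct.ext'
  intro a b
  ext y
  simp [Lmap, LinearMap.mul'_apply, Module.End.mul_apply, mul_assoc]

lemma key_mul' (f : H →ₗ[k] H) :
    LinearMap.mul' k (Module.End k H) ∘ₗ TensorProduct.map (Lmap k H) (Lmap k H ∘ₗ f) =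
      Lmap k H ∘ₗ LinearMap.mul' k H ∘ₗ f.lTensor H := by
  apply TensorProduct.ext'
  intro a b
  ext y
  simp [Lmap, LinearMap.mul'_apply, Module.End.mul_apply, mul_assoc]

lemma Lmap_comp_unit :
    Lmap k H ∘ₗ (Algebra.linearMap k H ∘ₗ Coalgebra.counit) = convUnit k H := by
  unfold convUnit Lmap
  ext x y
  simp [Algebra.smul_def]

lemma conv_Lcomp_L (f : H →ₗ[k] H) :
    conv k H (Lmap k H ∘ₗ f) (Lmap k H) =
      Lmap k H ∘ₗ (LinearMap.mul' k H ∘ₗ f.rTensor H ∘ₗ Coalgebra.comul) := by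
  show (LinearMap.mul' k (Module.End k H) ∘ₗ TensorProduct.map (Lmap k H ∘ₗ f) (Lmap k H))
      ∘ₗ Coalgebra.comul = _
  rw [key_mul]
  rfl

lemma conv_L_Lcomp (f : H →ₗ[k] H) :
    conv k H (Lmap k H) (Lmap k H ∘ₗ f) =
      Lmap k H ∘ₗ (LinearMap.mul' k H ∘ₗ f.lTensor H ∘ₗ Coalgebra.comul) := by
  show (LinearMap.mul' k (Module.End k H) ∘ₗ TensorProduct.map (Lmap k H) (Lmap k H ∘ₗ f))
      ∘ₗ Coalgebra.comul = _
  rw [key_mul']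
  rfl

lemma conv_unit_left (f : H →ₗ[k] Module.End k H) : conv k H (convUnit k H) f = f := by
  have h1 : TensorProduct.map (convUnit k H) f =
      TensorProduct.map (Algebra.linearMap k (Module.End k H)) f ∘ₗ
        (Coalgebra.counit (R := k) (A := H)).rTensor H := by
    rw [LinearMap.rTensor, ← TensorProduct.map_comp]
    rfl
  have h2 : conv k H (convUnit k H) f =
      (LinearMap.mul' k (Module.End k H) ∘ₗ
        TensorProduct.map (Algebra.linearMap k (Module.End k H)) f) ∘ₗ
        ((Coalgebra.counit (R := k) (A := H)).rTensor H ∘ₗ Coalgebra.comul) := by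
    show (LinearMap.mul' k (Module.End k H) ∘ₗ TensorProduct.map (convUnit k H) f)
      ∘ₗ Coalgebra.comul = _
    rw [h1]
    rfl
  rw [h2, Coalgebra.rTensor_counit_comp_comul]
  ext x; simp

lemma conv_unit_right (f : H →ₗ[k] Module.End k H) : conv k H f (convUnit k H) = f := by
  have h1 : TensorProduct.map f (convUnit k H) =
      TensorProduct.map f (Algebra.linearMap k (Module.End k H)) ∘ₗ
        (Coalgebra.counit (R := k) (A := H)).lTensor H := by
    rw [LinearMap.lTensor, ← TensorProduct.map_comp]
    rfl
  have h2 : conv k H f (convUnit k H) =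
      (LinearMap.mul' k (Module.End k H) ∘ₗ
        TensorProduct.map f (Algebra.linearMap k (Module.End k H))) ∘ₗ
        ((Coalgebra.counit (R := k) (A := H)).lTensor H ∘ₗ Coalgebra.comul) := by
    show (LinearMap.mul' k (Module.End k H) ∘ₗ TensorProduct.map f (convUnit k H))
      ∘ₗ Coalgebra.comul = _
    rw [h1]
    rfl
  rw [h2, Coalgebra.lTensor_counit_comp_comul]
  ext x; simp

lemma conv_assoc (f g h : H →ₗ[k] Module.End k H) :
    conv k H (conv k H f g) h = conv k H f (conv k H g h) := by
  have key : LinearMap.mul' k (Module.End k H) ∘ₗ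
      TensorProduct.map (LinearMap.mul' k (Module.End k H) ∘ₗ TensorProduct.map f g) h =
      (LinearMap.mul' k (Module.End k H) ∘ₗ
        TensorProduct.map f (LinearMap.mul' k (Module.End k H) ∘ₗ TensorProduct.map g h)) ∘ₗ
        (TensorProduct.assoc k H H H).toLinearMap := by
    apply TensorProduct.ext_threefold
    intro a b c
    simp [LinearMap.mul'_apply, mul_assoc]
  have e1 : TensorProduct.map (conv k H f g) h =
      TensorProduct.map (LinearMap.mul' k (Module.End k H) ∘ₗ TensorProduct.map f g) h ∘ₗ
        (Coalgebra.comul (R := k) (A := H)).rTensor H := by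
    rw [LinearMap.rTensor, ← TensorProduct.map_comp]
    rfl
  have e2 : TensorProduct.map f (conv k H g h) =
      TensorProduct.map f (LinearMap.mul' k (Module.End k H) ∘ₗ TensorProduct.map g h) ∘ₗ
        (Coalgebra.comul (R := k) (A := H)).lTensor H := by
    rw [LinearMap.lTensor, ← TensorProduct.map_comp]
    rfl
  have coas := Coalgebra.coassoc (R := k) (A := H)
  calc conv k H (conv k H f g) h
      = (LinearMap.mul' k (Module.End k H) ∘ₗ
          TensorProduct.map (LinearMap.mul' k (Module.End k H) ∘ₗ TensorProduct.map f g) h) ∘ₗ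
          ((Coalgebra.comul (R := k) (A := H)).rTensor H ∘ₗ Coalgebra.comul) := by
        show (LinearMap.mul' k (Module.End k H) ∘ₗ
          TensorProduct.map (conv k H f g) h) ∘ₗ Coalgebra.comul = _
        rw [e1]
        rfl
    _ = (LinearMap.mul' k (Module.End k H) ∘ₗ
          TensorProduct.map f (LinearMap.mul' k (Module.End k H) ∘ₗ TensorProduct.map g h)) ∘ₗ
          ((TensorProduct.assoc k H H H).toLinearMap ∘ₗ
            (Coalgebra.comul (R := k) (A := H)).rTensor H ∘ₗ Coalgebra.comul) := by
        rw [key]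
        rfl
    _ = (LinearMap.mul' k (Module.End k H) ∘ₗ
          TensorProduct.map f (LinearMap.mul' k (Module.End k H) ∘ₗ TensorProduct.map g h)) ∘ₗ
          ((Coalgebra.comul (R := k) (A := H)).lTensor H ∘ₗ Coalgebra.comul) := by
        rw [coas]
    _ = conv k H f (conv k H g h) := by
        show _ = (LinearMap.mul' k (Module.End k H) ∘ₗ
          TensorProduct.map f (conv k H g h)) ∘ₗ Coalgebra.comul
        rw [e2]
        rfl

end aux

/-- A bialgebra `H` is a Hopf algebra (i.e. admits an antipode `S`) if and only
if the map `L : a ↦ (x ↦ ax)` is invertible in the convolution algebra `Hom(H, End(H))`. -/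
theorem hopf_iff_L_convolution_invertible :
    (∃ S : H →ₗ[k] H,
        (LinearMap.mul' k H ∘ₗ S.rTensor H ∘ₗ Coalgebra.comul =
            Algebra.linearMap k H ∘ₗ Coalgebra.counit) ∧
        (LinearMap.mul' k H ∘ₗ S.lTensor H ∘ₗ Coalgebra.comul =
            Algebra.linearMap k H ∘ₗ Coalgebra.counit)) ↔
      (∃ L' : H →ₗ[k] Module.End k H,
        conv k H L' (Lmap k H) = convUnit k H ∧ conv k H (Lmap k H) L' = convUnit k H) := by
  constructor
  · rintro ⟨S, hr, hl⟩
    refine ⟨Lmap k H ∘ₗ S, ?_, ?_⟩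
    · rw [conv_Lcomp_L, hr, Lmap_comp_unit]
    · rw [conv_L_Lcomp, hl, Lmap_comp_unit]
  · rintro ⟨L', h1, h2⟩
    set S : H →ₗ[k] H := evalOne ∘ₗ L' with hS
    have cancel : ∀ A B : H →ₗ[k] H, Lmap k H ∘ₗ A = Lmap k H ∘ₗ B → A = B := by
      intro A B hAB
      have h := congrArg (fun m => (evalOne (k := k) (H := H)) ∘ₗ m) hAB
      simpa only [← LinearMap.comp_assoc, evalOne_comp_Lmap, LinearMap.id_comp] using h
    have keyA : evalOne ∘ₗ (LinearMap.mul' k (Module.End k H) ∘ₗ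
        TensorProduct.map (Lmap k H) L') =
        LinearMap.mul' k H ∘ₗ S.lTensor H := by
      apply TensorProduct.ext'
      intro a b
      simp [hS, Lmap, LinearMap.mul'_apply, Module.End.mul_apply]
    have hA : LinearMap.mul' k H ∘ₗ S.lTensor H ∘ₗ Coalgebra.comul =
        Algebra.linearMap k H ∘ₗ Coalgebra.counit := by
      have h3 : evalOne ∘ₗ conv k H (Lmap k H) L' =
          LinearMap.mul' k H ∘ₗ S.lTensor H ∘ₗ Coalgebra.comul := by
        show (evalOne ∘ₗ (LinearMap.mul' k (Module.End k H) ∘ₗ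
          TensorProduct.map (Lmap k H) L')) ∘ₗ Coalgebra.comul = _
        rw [keyA]
        rfl
      have h4 : evalOne ∘ₗ convUnit k H =
          Algebra.linearMap k H ∘ₗ Coalgebra.counit := by
        ext x
        simp [convUnit, Module.algebraMap_end_apply, Algebra.algebraMap_eq_smul_one]
      rw [← h3, h2, h4]
    have hB : conv k H (Lmap k H) (Lmap k H ∘ₗ S) = convUnit k H := by
      rw [conv_L_Lcomp, hA, Lmap_comp_unit]
    have hC : Lmap k H ∘ₗ S = L' := by
      calc Lmap k H ∘ₗ S = conv k H (convUnit k H) (Lmap k H ∘ₗ S) :=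
            (conv_unit_left _).symm
        _ = conv k H (conv k H L' (Lmap k H)) (Lmap k H ∘ₗ S) := by rw [h1]
        _ = conv k H L' (conv k H (Lmap k H) (Lmap k H ∘ₗ S)) := conv_assoc _ _ _
        _ = conv k H L' (convUnit k H) := by rw [hB]
        _ = L' := conv_unit_right _
    have h5 : Lmap k H ∘ₗ (LinearMap.mul' k H ∘ₗ S.rTensor H ∘ₗ Coalgebra.comul) =
        Lmap k H ∘ₗ (Algebra.linearMap k H ∘ₗ Coalgebra.counit) := by
      rw [← conv_Lcomp_L, hC, h1, Lmap_comp_unit]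
    exact ⟨S, cancel _ _ h5, hA⟩
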